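/- arXiv:2405.16436 — 6 statements merged into one kernel-verified Lean document; each statement's English description precedes it below -/
import Mathlib

section
/- Let A be a measurable space, μ a probability measure on A, r : A → ℝ a bounded measurable function, and β > 0. Set Z = ∫ exp(r(a)/β) dμ(a) and let g be the Gibbs measure with density exp(r/β)/Z with respect to μ. Then for every probability measure p on A with p ≪ μ and KL(p‖μ) < ∞, one has the identity ∫ r dp − β·KL(p‖μ) = β·log Z − β·KL(p‖g). -/
open MeasureTheory Real
open scoped ENNReal Classical

/-- Kullback–Leibler divergence, valued in the extended reals: equal to `∫ log (dp/dμ) dp`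
when `p ≪ μ` and this integral exists, and `+∞` otherwise. -/
noncomputable def KL {α : Type*} [MeasurableSpace α] (p μ : Measure α) : EReal :=
  if p ≪ μ ∧ Integrable (llr p μ) p then ((∫ a, llr p μ a ∂p : ℝ) : EReal) else ⊤

/-- For every probability measure `p ≪ μ` with finite `KL(p‖μ)`,
`∫ r dp − β·KL(p‖μ) = β·log Z − β·KL(p‖g)`, where `g` is the Gibbs measure with
density `exp(r/β)/Z` with respect to `μ`. -/
theorem klRegValue_eq_log_partition_sub_kl_gibbs
    {A : Type*} [MeasurableSpace A] (μ : Measure A) [IsProbabilityMeasure μ]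
    (r : A → ℝ) (hrmeas : Measurable r) (B : ℝ) (hrbdd : ∀ a, |r a| ≤ B)
    (β : ℝ) (hβ : 0 < β)
    (Z : ℝ) (hZ : Z = ∫ a, Real.exp (r a / β) ∂μ)
    (g : Measure A)
    (hg : g = μ.withDensity (fun a => ENNReal.ofReal (Real.exp (r a / β) / Z)))
    (p : Measure A) (hp : IsProbabilityMeasure p) (hpac : p ≪ μ)
    (hfin : KL p μ < ⊤) :
    ((∫ a, r a ∂p : ℝ) : EReal) - ((β : ℝ) : EReal) * KL p μ
      = ((β * Real.log Z : ℝ) : EReal) - ((β : ℝ) : EReal) * KL p g := by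
  haveI := hp
  have hcond : p ≪ μ ∧ Integrable (llr p μ) p := by
    by_contra h
    simp [KL, h] at hfin
  obtain ⟨-, hint⟩ := hcond
  -- integrability of exp(r/β)
  have hexpint : Integrable (fun a => Real.exp (r a / β)) μ := by
    refine ⟨((hrmeas.div_const β).exp).aestronglyMeasurable,
      HasFiniteIntegral.of_bounded (C := Real.exp (B / β)) (Filter.Eventually.of_forall fun a => ?_)⟩
    rw [Real.norm_eq_abs, abs_of_pos (Real.exp_pos _)]
    exact Real.exp_le_exp.mpr (div_le_div_of_nonneg_right (le_of_abs_le (hrbdd a)) hβ.le) |>.trans_eq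
      rfl
  have hZpos : 0 < Z := hZ ▸ integral_exp_pos hexpint
  have hZne : Z ≠ 0 := hZpos.ne'
  set f : A → ℝ≥0∞ := fun a => ENNReal.ofReal (Real.exp (r a / β) / Z) with hf_def
  have hfmeas : Measurable f := (((hrmeas.div_const β).exp).div_const Z).ennreal_ofReal
  have hf_ne_zero : ∀ a, f a ≠ 0 := fun a => by
    simp only [hf_def, ne_eq, ENNReal.ofReal_eq_zero, not_le]
    positivity
  have hf_ne_top : ∀ a, f a ≠ ∞ := fun a => ENNReal.ofReal_ne_top
  have hμg : μ ≪ g := by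
    rw [hg]
    exact withDensity_absolutelyContinuous' hfmeas.aemeasurable
      (Filter.Eventually.of_forall hf_ne_zero)
  have hpg : p ≪ g := hpac.trans hμg
  -- Radon-Nikodym derivative of p w.r.t. g
  have hrn : p.rnDeriv g =ᵐ[μ] fun x => (f x)⁻¹ * p.rnDeriv μ x := by
    rw [hg]
    exact Measure.rnDeriv_withDensity_right p μ hfmeas.aemeasurable
      (Filter.Eventually.of_forall hf_ne_zero) (Filter.Eventually.of_forall hf_ne_top)
  -- llr identity a.e. [p]
  have hllr : llr p g =ᵐ[p] fun a => llr p μ a - r a / β + Real.log Z := by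
    filter_upwards [hrn.filter_mono hpac.ae_le, Measure.rnDeriv_pos hpac,
      hpac.ae_le (Measure.rnDeriv_lt_top p μ)] with a ha hpos hlt
    have hdne : (p.rnDeriv μ a).toReal ≠ 0 :=
      (ENNReal.toReal_pos hpos.ne' hlt.ne).ne'
    have hftr : ((f a)⁻¹).toReal = (Real.exp (r a / β) / Z)⁻¹ := by
      rw [ENNReal.toReal_inv, hf_def, ENNReal.toReal_ofReal (by positivity)]
    have : (p.rnDeriv g a).toReal = (Real.exp (r a / β) / Z)⁻¹ * (p.rnDeriv μ a).toReal := by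
      rw [ha, ENNReal.toReal_mul, hftr]
    rw [llr_def, llr_def]
    simp only [this]
    rw [Real.log_mul (by positivity) hdne, Real.log_inv,
      Real.log_div (Real.exp_ne_zero _) hZne, Real.log_exp]
    ring
  -- integrability of r w.r.t. p
  have hrint : Integrable r p :=
    ⟨hrmeas.aestronglyMeasurable,
      HasFiniteIntegral.of_bounded (C := B) (Filter.Eventually.of_forall fun a => hrbdd a)⟩
  have haux : Integrable (fun a => llr p μ a - r a / β + Real.log Z) p :=
    (hint.sub (hrint.div_const β)).add (integrable_const _)
  have hintg : Integrable (llr p g) p := haux.congr hllr.symm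
  have hKLμ : KL p μ = ((∫ a, llr p μ a ∂p : ℝ) : EReal) := by
    rw [KL, if_pos ⟨hpac, hint⟩]
  have hintval : ∫ a, llr p g a ∂p
      = (∫ a, llr p μ a ∂p) - (∫ a, r a ∂p) / β + Real.log Z := by
    have h1 : Integrable (fun a => llr p μ a - r a / β) p := hint.sub (hrint.div_const β)
    rw [integral_congr_ae hllr, integral_add h1 (integrable_const _),
      integral_sub hint (hrint.div_const β), integral_div, integral_const]
    simp
  have hKLg : KL p g = (((∫ a, llr p μ a ∂p) - (∫ a, r a ∂p) / β + Real.log Z : ℝ) : EReal) := by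
    rw [KL, if_pos ⟨hpg, hintg⟩, hintval]
  rw [hKLμ, hKLg, ← EReal.coe_mul, ← EReal.coe_mul, ← EReal.coe_sub, ← EReal.coe_sub,
    EReal.coe_eq_coe_iff]
  field_simp
  ring
end

section
/- Let A be a measurable space, μ a probability measure on A, r : A → ℝ a bounded measurable function, and β > 0. Set Z = ∫ exp(r(a)/β) dμ(a) and let g be the Gibbs measure with density exp(r/β)/Z with respect to μ. If a probability measure p on A with p ≪ μ and KL(p‖μ) < ∞ satisfies ∫ r dp − β·KL(p‖μ) = β·log Z, then p = g; that is, the maximizer of the KL-regularized expected reward is unique and equals the Gibbs measure. -/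
open MeasureTheory Real
open scoped ENNReal Classical

section KL

variable {α : Type*} [MeasurableSpace α] {p μ : Measure α}

lemma KL_of_ac_of_integrable (hpμ : p ≪ μ) (hint : Integrable (llr p μ) p) :
    KL p μ = ((∫ a, llr p μ a ∂p : ℝ) : EReal) :=
  if_pos ⟨hpμ, hint⟩

lemma KL_lt_top_iff : KL p μ < ⊤ ↔ p ≪ μ ∧ Integrable (llr p μ) p := by
  unfold KL
  split_ifs with h <;> simp [h]

end KL

theorem eq_tilted_of_integral_sub_integral_llr_eq {α : Type*} [MeasurableSpace α]
    {μ p : Measure α} [SigmaFinite μ] [NeZero μ] [IsProbabilityMeasure p] {f : α → ℝ}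
    (hpμ : p ≪ μ) (hfp : Integrable f p) (hfμ : Integrable (fun a ↦ exp (f a)) μ)
    (hllr : Integrable (llr p μ) p)
    (h : ∫ a, f a ∂p - ∫ a, llr p μ a ∂p = log (∫ a, exp (f a) ∂μ)) :
    p = μ.tilted f := by
  have := isProbabilityMeasure_tilted hfμ
  have hpt : p ≪ μ.tilted f := hpμ.trans (absolutelyContinuous_tilted hfμ)
  rw [← InformationTheory.klDiv_eq_zero_iff,
    InformationTheory.klDiv_of_ac_of_integrable hpt
      (integrable_llr_tilted_right hpμ hfp hllr hfμ),
    integral_llr_tilted_right hpμ hfp hfμ hllr]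
  simp only [probReal_univ, add_sub_cancel_right, ENNReal.ofReal_eq_zero]
  linarith

theorem unique_maximizer_of_klRegValue_general
    {A : Type*} [MeasurableSpace A] (μ : Measure A) [IsProbabilityMeasure μ]
    (r : A → ℝ) (hrmeas : Measurable r) (B : ℝ) (hrbdd : ∀ a, |r a| ≤ B)
    (β : ℝ) (hβ : 0 < β)
    (Z : ℝ) (hZ : Z = ∫ a, Real.exp (r a / β) ∂μ)
    (g : Measure A)
    (hg : g = μ.withDensity (fun a => ENNReal.ofReal (Real.exp (r a / β) / Z)))
    (p : Measure A) (hp : IsProbabilityMeasure p)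
    (hfin : KL p μ < ⊤)
    (hopt : ((∫ a, r a ∂p : ℝ) : EReal) - ((β : ℝ) : EReal) * KL p μ
      = ((β * Real.log Z : ℝ) : EReal)) :
    p = g := by
  obtain ⟨hpμ, hllr⟩ := KL_lt_top_iff.1 hfin
  rw [KL_of_ac_of_integrable hpμ hllr] at hopt
  have hopt' : ∫ a, r a ∂p - β * ∫ a, llr p μ a ∂p = β * log Z := by exact_mod_cast hopt
  have hr : Integrable r p :=
    .of_bound hrmeas.aestronglyMeasurable B (.of_forall fun a ↦ by simpa using hrbdd a)
  have hexp : Integrable (fun a ↦ exp (r a / β)) μ := by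
    refine .of_bound (by fun_prop) (exp (B / β)) (.of_forall fun a ↦ ?_)
    rw [norm_of_nonneg (exp_pos _).le, exp_le_exp]
    exact div_le_div_of_nonneg_right (abs_le.1 (hrbdd a)).2 hβ.le
  have hg_tilted : g = μ.tilted (fun a ↦ r a / β) := by rw [hg, Measure.tilted, hZ]
  rw [hg_tilted]
  refine eq_tilted_of_integral_sub_integral_llr_eq hpμ (hr.div_const β) hexp hllr ?_
  rw [integral_div, ← hZ]
  field_simp
  linarith

/-- Uniqueness of the maximizer of the KL-regularized expected reward: if a probability
measure `p ≪ μ` with finite `KL(p‖μ)` attains the optimal value `β·log Z`, then `p`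
equals the Gibbs measure `g` with density `exp(r/β)/Z` with respect to `μ`. -/
theorem unique_maximizer_of_klRegValue
    {A : Type*} [MeasurableSpace A] (μ : Measure A) [IsProbabilityMeasure μ]
    (r : A → ℝ) (hrmeas : Measurable r) (B : ℝ) (hrbdd : ∀ a, |r a| ≤ B)
    (β : ℝ) (hβ : 0 < β)
    (Z : ℝ) (hZ : Z = ∫ a, Real.exp (r a / β) ∂μ)
    (g : Measure A)
    (hg : g = μ.withDensity (fun a => ENNReal.ofReal (Real.exp (r a / β) / Z)))
    (p : Measure A) (hp : IsProbabilityMeasure p) (hpac : p ≪ μ)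
    (hfin : KL p μ < ⊤)
    (hopt : ((∫ a, r a ∂p : ℝ) : EReal) - ((β : ℝ) : EReal) * KL p μ
      = ((β * Real.log Z : ℝ) : EReal)) :
    p = g :=
  unique_maximizer_of_klRegValue_general μ r hrmeas B hrbdd β hβ Z hZ g hg p hp hfin hopt
end

section
/- Let X be a nonempty set and Y a nonempty compact topological space. Let f : X × Y → ℝ satisfy: (i) for every x ∈ X, the map y ↦ f(x,y) is lower semicontinuous on Y; (ii) f is concave-like on X: for all x₁, x₂ ∈ X and α ∈ [0,1] there exists x₃ ∈ X with α·f(x₁,y) + (1−α)·f(x₂,y) ≤ f(x₃,y) for all y ∈ Y; (iii) f is convex-like on Y: for all y₁, y₂ ∈ Y and t ∈ [0,1] there exists y₃ ∈ Y with f(x,y₃) ≤ t·f(x,y₁) + (1−t)·f(x,y₂) for all x ∈ X. Then, with suprema and infima taken in the extended reals, ⨆_{x∈X} ⨅_{y∈Y} f(x,y) = ⨅_{y∈Y} ⨆_{x∈X} f(x,y); moreover, for each x ∈ X the infimum ⨅_{y∈Y} f(x,y) is attained. -/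
/-- A lower semicontinuous real function on a nonempty compact space attains its minimum. -/
lemma fan_aux_lsc_min {Y : Type*} [TopologicalSpace Y] [CompactSpace Y] [Nonempty Y]
    (g : Y → ℝ) (hg : LowerSemicontinuous g) : ∃ y₀, ∀ y, g y₀ ≤ g y := by
  classical
  by_contra h
  push_neg at h
  have hclosed : ∀ y : Y, IsClosed {z : Y | g z ≤ g y} := fun y =>
    hg.isClosed_preimage (g y)
  have hempty : (Set.univ ∩ ⋂ y : Y, {z : Y | g z ≤ g y}) = ∅ := by
    by_contra hne
    obtain ⟨z, hz⟩ := Set.nonempty_iff_ne_empty.mpr hne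
    obtain ⟨y, hy⟩ := h z
    have := Set.mem_iInter.mp hz.2 y
    exact absurd this (not_le.mpr hy)
  obtain ⟨t, ht⟩ := isCompact_univ.elim_finite_subfamily_closed _ hclosed hempty
  rcases t.eq_empty_or_nonempty with rfl | htne
  · simp at ht
  · obtain ⟨y₀, hy₀t, hy₀⟩ := t.exists_min_image g htne
    have : y₀ ∈ Set.univ ∩ ⋂ y ∈ t, {z : Y | g z ≤ g y} := by
      refine ⟨trivial, ?_⟩
      simp only [Set.mem_iInter]
      exact fun y hy => hy₀ y hy
    rw [ht] at this
    exact this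

/-- Iterated concave-like property: convex combinations over a finite set are dominated by
some single `f x₀`. -/
lemma fan_aux_concave_comb {X Y ι : Type*} (f : X → Y → ℝ)
    (hcc : ∀ x₁ x₂ : X, ∀ α ∈ Set.Icc (0 : ℝ) 1, ∃ x₃ : X,
      ∀ y, α * f x₁ y + (1 - α) * f x₂ y ≤ f x₃ y)
    (g : ι → X) (t : Finset ι) :
    ∀ μ : ι → ℝ, (∀ i ∈ t, 0 ≤ μ i) → (∑ i ∈ t, μ i) = 1 →
      ∃ x₀, ∀ y, (∑ i ∈ t, μ i * f (g i) y) ≤ f x₀ y := by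
  classical
  induction t using Finset.induction_on with
  | empty => intro μ _ hsum; simp at hsum
  | @insert a t ha IH =>
    intro μ hnn hsum
    rw [Finset.sum_insert ha] at hsum
    have hα0 : 0 ≤ μ a := hnn a (t.mem_insert_self a)
    have htnn : ∀ i ∈ t, 0 ≤ μ i := fun i hi => hnn i (Finset.mem_insert_of_mem hi)
    have hts0 : 0 ≤ ∑ i ∈ t, μ i := Finset.sum_nonneg htnn
    have hα1 : μ a ≤ 1 := by linarith
    by_cases h1 : μ a = 1
    · have hz : ∀ i ∈ t, μ i = 0 := by
        rw [h1] at hsum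
        exact (Finset.sum_eq_zero_iff_of_nonneg htnn).mp (by linarith)
      refine ⟨g a, fun y => ?_⟩
      rw [Finset.sum_insert ha, Finset.sum_eq_zero (fun i hi => by rw [hz i hi, zero_mul]),
        h1]
      simp
    · have hαlt : μ a < 1 := lt_of_le_of_ne hα1 h1
      have hpos : 0 < 1 - μ a := by linarith
      obtain ⟨x₁, hx₁⟩ := IH (fun i => μ i / (1 - μ a))
        (fun i hi => div_nonneg (htnn i hi) hpos.le)
        (by rw [← Finset.sum_div]; field_simp; linarith)
      obtain ⟨x₃, hx₃⟩ := hcc (g a) x₁ (μ a) ⟨hα0, hα1⟩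
      refine ⟨x₃, fun y => ?_⟩
      have h2 : ∑ i ∈ t, μ i * f (g i) y
          = (1 - μ a) * ∑ i ∈ t, (μ i / (1 - μ a)) * f (g i) y := by
        rw [Finset.mul_sum]
        refine Finset.sum_congr rfl fun i _ => ?_
        field_simp
      have h3 : (1 - μ a) * (∑ i ∈ t, (μ i / (1 - μ a)) * f (g i) y)
          ≤ (1 - μ a) * f x₁ y := mul_le_mul_of_nonneg_left (hx₁ y) hpos.le
      calc ∑ i ∈ insert a t, μ i * f (g i) y
          = μ a * f (g a) y + ∑ i ∈ t, μ i * f (g i) y := Finset.sum_insert ha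
        _ = μ a * f (g a) y + (1 - μ a) * ∑ i ∈ t, (μ i / (1 - μ a)) * f (g i) y := by
            rw [h2]
        _ ≤ μ a * f (g a) y + (1 - μ a) * f x₁ y := by linarith
        _ ≤ f x₃ y := hx₃ y

/-- The finite separation lemma: if on every `y` some `x` in the finite set `t` has
`c ≤ f x y`, then a single `x₀` works for all `y` (using concave-like / convex-like). -/
lemma fan_aux_finite {X Y : Type*} [Nonempty Y] (f : X → Y → ℝ)
    (hcc : ∀ x₁ x₂ : X, ∀ α ∈ Set.Icc (0 : ℝ) 1, ∃ x₃ : X,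
      ∀ y, α * f x₁ y + (1 - α) * f x₂ y ≤ f x₃ y)
    (hcv : ∀ y₁ y₂ : Y, ∀ s ∈ Set.Icc (0 : ℝ) 1, ∃ y₃ : Y,
      ∀ x, f x y₃ ≤ s * f x y₁ + (1 - s) * f x y₂)
    (t : Finset X) (c : ℝ) (hc : ∀ y, ∃ x ∈ t, c ≤ f x y) :
    ∃ x₀, ∀ y, c ≤ f x₀ y := by
  classical
  obtain ⟨xw, hxw⟩ := (hc (Classical.arbitrary Y)).imp (fun x hx => hx.1)
  have htne : t.Nonempty := ⟨xw, hxw⟩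
  haveI : Nonempty ↥t := ⟨⟨xw, hxw⟩⟩
  -- work in E = ↥t → ℝ
  set D : Set (↥t → ℝ) := {u | ∃ y, ∀ i : ↥t, f i y ≤ u i} with hD
  set O : Set (↥t → ℝ) := {u | ∀ i : ↥t, u i < c} with hO
  have hDconv : Convex ℝ D := by
    rintro u ⟨y₁, hy₁⟩ v ⟨y₂, hy₂⟩ a b ha hb hab
    obtain ⟨y₃, hy₃⟩ := hcv y₁ y₂ a ⟨ha, by linarith⟩
    refine ⟨y₃, fun i => ?_⟩
    have h1a : (1 : ℝ) - a = b := by linarith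
    have := hy₃ i
    rw [h1a] at this
    have h2 : a * f i y₁ + b * f i y₂ ≤ a * u i + b * v i := by
      have := hy₁ i; have := hy₂ i
      have h3 := mul_le_mul_of_nonneg_left (hy₁ i) ha
      have h4 := mul_le_mul_of_nonneg_left (hy₂ i) hb
      linarith
    simpa using this.trans h2
  have hOconv : Convex ℝ O := by
    rintro u hu v hv a b ha hb hab
    intro i
    rcases eq_or_lt_of_le ha with rfl | hapos
    · simpa [show b = (1:ℝ) by linarith] using hv i
    · have h3 : a * u i < a * c := by
        exact (mul_lt_mul_iff_right₀ hapos).mpr (hu i)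
      have h4 : b * v i ≤ b * c := mul_le_mul_of_nonneg_left (hv i).le hb
      have h5 : a * c + b * c = c := by rw [← add_mul, hab, one_mul]
      have : a * u i + b * v i < c := by linarith
      simpa using this
  have hOopen : IsOpen O := by
    have : O = ⋂ i : ↥t, (fun u : ↥t → ℝ => u i) ⁻¹' Set.Iio c := by
      ext u; simp [hO, Set.mem_iInter]
    rw [this]
    exact isOpen_iInter_of_finite fun i => (continuous_apply i).isOpen_preimage _ isOpen_Iio
  have hdisj : Disjoint O D := by
    rw [Set.disjoint_left]
    rintro u hu ⟨y, hy⟩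
    obtain ⟨x, hxt, hxc⟩ := hc y
    exact absurd ((hxc.trans (hy ⟨x, hxt⟩)).trans_lt (hu ⟨x, hxt⟩)) (lt_irrefl c)
  obtain ⟨φ, u, hφO, hφD⟩ := geometric_hahn_banach_open hOconv hOopen hDconv hdisj
  set e : ↥t → (↥t → ℝ) := fun i j => if j = i then 1 else 0 with he
  set lam : ↥t → ℝ := fun i => φ (e i) with hlam
  have hrep : ∀ v : ↥t → ℝ, φ v = ∑ i, v i * lam i := by
    intro v
    have hv : v = ∑ i, v i • e i := by
      funext j
      simp [he, Finset.sum_apply, mul_ite, mul_one, mul_zero, Finset.sum_ite_eq]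
    calc φ v = φ (∑ i, v i • e i) := by rw [← hv]
      _ = ∑ i, v i * lam i := by
          rw [map_sum]
          exact Finset.sum_congr rfl fun i _ => by rw [map_smul, smul_eq_mul]
  have hconstO : ∀ ε : ℝ, 0 < ε → (fun _ : ↥t => c - ε) ∈ O := fun ε hε i => by
    simp; linarith
  have hlamnn : ∀ i, 0 ≤ lam i := by
    intro i
    by_contra hneg
    push_neg at hneg
    set cst : ↥t → ℝ := fun _ => c - 1 with hcst
    have hcstO : cst ∈ O := hconstO 1 one_pos
    have hcstlt : φ cst < u := hφO cst hcstO
    set T : ℝ := (u - φ cst) / (-lam i) + 1 with hT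
    have hTpos : 0 < T := by
      have h1 : 0 < -lam i := by linarith
      have h2 : 0 < u - φ cst := by linarith
      positivity
    have hmem : cst - T • e i ∈ O := by
      intro j
      by_cases hij : j = i
      · simp only [hcst, he, Pi.sub_apply, Pi.smul_apply, hij, if_pos rfl, if_true,
          smul_eq_mul, mul_one]
        linarith
      · simp only [hcst, he, Pi.sub_apply, Pi.smul_apply, if_neg hij,
          smul_eq_mul, mul_zero, sub_zero]
        linarith
    have hval : φ (cst - T • e i) = φ cst - T * lam i := by
      simp only [map_sub, map_smul, smul_eq_mul, hlam]
    have hlt := hφO _ hmem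
    rw [hval] at hlt
    have h0 : -lam i ≠ 0 := ne_of_gt (by linarith)
    have hTl : T * (-lam i) = (u - φ cst) + (-lam i) := by
      rw [hT, add_mul, one_mul, div_mul_cancel₀ _ h0]
    nlinarith
  set S : ℝ := ∑ i, lam i with hS
  have hSnn : 0 ≤ S := Finset.sum_nonneg fun i _ => hlamnn i
  have hSpos : 0 < S := by
    rcases eq_or_lt_of_le hSnn with heq | h
    · exfalso
      have hz : ∀ i : ↥t, lam i = 0 := fun i => by
        have := (Finset.sum_eq_zero_iff_of_nonneg (fun i _ => hlamnn i)).mp heq.symm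
        exact this i (Finset.mem_univ i)
      have hφ0 : ∀ v, φ v = 0 := fun v => by
        rw [hrep]; exact Finset.sum_eq_zero fun i _ => by rw [hz i, mul_zero]
      have h1 : (0:ℝ) < u := by
        have := hφO _ (hconstO 1 one_pos); rwa [hφ0] at this
      obtain ⟨y⟩ := ‹Nonempty Y›
      have h2 : u ≤ 0 := by
        have := hφD (fun i : ↥t => f i y) ⟨y, fun i => le_rfl⟩
        rwa [hφ0] at this
      linarith
    · exact h
  -- c * S ≤ u
  have hcS : c * S ≤ u := by
    by_contra hlt
    push_neg at hlt
    set ε : ℝ := (c * S - u) / S with hε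
    have hεpos : 0 < ε := div_pos (by linarith) hSpos
    have := hφO _ (hconstO ε hεpos)
    rw [hrep] at this
    have hsum : ∑ i, (c - ε) * lam i = (c - ε) * S := by
      rw [hS, Finset.mul_sum]
    rw [hsum] at this
    have : (c - ε) * S = u := by
      rw [hε, sub_mul, div_mul_cancel₀ _ hSpos.ne']; ring
    linarith [hφO _ (hconstO ε hεpos), hrep (fun _ : ↥t => c - ε)]
  -- for each y, ∑ λ_i f(x_i, y) ≥ u ≥ c S
  have hkey : ∀ y, c * S ≤ ∑ i : ↥t, lam i * f i y := by
    intro y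
    have := hφD (fun i : ↥t => f i y) ⟨y, fun i => le_rfl⟩
    rw [hrep] at this
    have heq : ∑ i : ↥t, f i y * lam i = ∑ i : ↥t, lam i * f i y :=
      Finset.sum_congr rfl fun i _ => mul_comm _ _
    rw [heq] at this
    linarith
  -- now use the concave-like combination lemma with weights λ_i / S
  obtain ⟨x₀, hx₀⟩ := fan_aux_concave_comb f hcc (fun i : ↥t => (i : X)) Finset.univ
    (fun i => lam i / S)
    (fun i _ => div_nonneg (hlamnn i) hSnn)
    (by rw [← Finset.sum_div, ← hS]; field_simp)
  refine ⟨x₀, fun y => ?_⟩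
  have h5 : ∑ i : ↥t, (lam i / S) * f i y = (∑ i : ↥t, lam i * f i y) / S := by
    rw [Finset.sum_div]
    exact Finset.sum_congr rfl fun i _ => by field_simp
  have h6 : c ≤ ∑ i : ↥t, (lam i / S) * f i y := by
    rw [h5]
    rw [le_div_iff₀ hSpos]
    have := hkey y
    linarith
  exact h6.trans (hx₀ y)

/-- Fan's minimax theorem: if `Y` is a nonempty compact topological space, `f(x,·)` is
lower semicontinuous for every `x`, `f` is concave-like on `X` and convex-like on `Y`,
then `⨆ₓ ⨅_y f(x,y) = ⨅_y ⨆ₓ f(x,y)` in the extended reals; moreover for each `x`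
the infimum over `y` is attained. -/
theorem fan_minimax
    {X Y : Type*} [Nonempty X] [TopologicalSpace Y] [CompactSpace Y] [Nonempty Y]
    (f : X → Y → ℝ)
    (hlsc : ∀ x, LowerSemicontinuous (f x))
    (hconcavelike : ∀ x₁ x₂ : X, ∀ α ∈ Set.Icc (0 : ℝ) 1, ∃ x₃ : X,
      ∀ y, α * f x₁ y + (1 - α) * f x₂ y ≤ f x₃ y)
    (hconvexlike : ∀ y₁ y₂ : Y, ∀ t ∈ Set.Icc (0 : ℝ) 1, ∃ y₃ : Y,
      ∀ x, f x y₃ ≤ t * f x y₁ + (1 - t) * f x y₂) :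
    ((⨆ x, ⨅ y, ((f x y : ℝ) : EReal)) = ⨅ y, ⨆ x, ((f x y : ℝ) : EReal)) ∧
    (∀ x, ∃ y₀ : Y, (⨅ y, ((f x y : ℝ) : EReal)) = ((f x y₀ : ℝ) : EReal)) := by
  classical
  constructor
  · refine le_antisymm (iSup_iInf_le_iInf_iSup _) ?_
    by_contra hlt
    push_neg at hlt
    obtain ⟨c, hc1, hc2⟩ := EReal.exists_between_coe_real hlt
    -- c < inf_y sup_x f, show c ≤ sup_x inf_y f for contradiction
    have hy : ∀ y : Y, ∃ x, c < f x y := by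
      intro y
      have h1 : (c : EReal) < ⨆ x, ((f x y : ℝ) : EReal) :=
        hc2.trans_le (iInf_le _ y)
      obtain ⟨x, hx⟩ := lt_iSup_iff.mp h1
      exact ⟨x, by exact_mod_cast hx⟩
    have hclosed : ∀ x : X, IsClosed {y : Y | f x y ≤ c} :=
      fun x => (hlsc x).isClosed_preimage c
    have hempty : (Set.univ ∩ ⋂ x : X, {y : Y | f x y ≤ c}) = ∅ := by
      by_contra hne
      obtain ⟨y, hy2⟩ := Set.nonempty_iff_ne_empty.mpr hne
      obtain ⟨x, hx⟩ := hy y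
      exact absurd (Set.mem_iInter.mp hy2.2 x) (not_le.mpr hx)
    obtain ⟨t, ht⟩ := isCompact_univ.elim_finite_subfamily_closed _ hclosed hempty
    have hct : ∀ y, ∃ x ∈ t, c ≤ f x y := by
      intro y
      by_contra hno
      push_neg at hno
      have : y ∈ Set.univ ∩ ⋂ x ∈ t, {z : Y | f x z ≤ c} := by
        refine ⟨trivial, ?_⟩
        simp only [Set.mem_iInter]
        exact fun x hx => (hno x hx).le
      rw [ht] at this
      exact this
    obtain ⟨x₀, hx₀⟩ := fan_aux_finite f hconcavelike hconvexlike t c hct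
    have : (c : EReal) ≤ ⨆ x, ⨅ y, ((f x y : ℝ) : EReal) := by
      refine le_trans ?_ (le_iSup _ x₀)
      exact le_iInf fun y => by exact_mod_cast hx₀ y
    exact absurd (this.trans_lt hc1) (lt_irrefl _)
  · intro x
    obtain ⟨y₀, hy₀⟩ := fan_aux_lsc_min (f x) (hlsc x)
    refine ⟨y₀, le_antisymm (iInf_le _ y₀) (le_iInf fun y => ?_)⟩
    exact_mod_cast hy₀ y
end

section
/- Fix δ ∈ (0, 1/e). Assume 𝓡 admits a finite ε-cover in sup norm of cardinality M, with ε = 1/(6·(1+e^{R̄})·N). Then with probability at least 1−δ over the draw of the N samples, simultaneously for every r ∈ 𝓡: L(r*) − L(r) ≤ −2·E_{(x,a¹,a⁰)∼μ_D}[ H²( σ(r*(x,a¹)−r*(x,a⁰)), σ(r(x,a¹)−r(x,a⁰)) ) ] + (3/N)·log(M/δ), where H²(p,q) = ½·[(√p − √q)² + (√(1−p) − √(1−q))²] is the squared Hellinger distance between Bernoulli(p) and Bernoulli(q). -/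
open MeasureTheory ProbabilityTheory Real
open scoped ENNReal

/-- The sigmoid function `σ(z) = 1/(1+e^{−z})`. -/
noncomputable def sigmoid (z : ℝ) : ℝ := 1 / (1 + Real.exp (-z))

/-- Squared Hellinger distance between `Bernoulli(p)` and `Bernoulli(q)`. -/
noncomputable def hellingerSq (p q : ℝ) : ℝ :=
  (1 / 2) * ((Real.sqrt p - Real.sqrt q) ^ 2 + (Real.sqrt (1 - p) - Real.sqrt (1 - q)) ^ 2)

/-- The cross-entropy (negative log-likelihood) loss of the Bradley–Terry preference model
on a dataset of `N` tuples `(x_i, a_i¹, a_i⁰, y_i)`. -/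
noncomputable def BTLoss {X A : Type*} (N : ℕ) (data : Fin N → (X × A × A) × Bool)
    (r : X → A → ℝ) : ℝ :=
  -(1 / (N : ℝ)) * ∑ i : Fin N,
    (if (data i).2 then
      Real.log (_root_.sigmoid (r (data i).1.1 (data i).1.2.1 - r (data i).1.1 (data i).1.2.2))
    else
      Real.log (_root_.sigmoid (r (data i).1.1 (data i).1.2.2 - r (data i).1.1 (data i).1.2.1)))

/-!
For a reward `r`, the half log-likelihood ratio `f = (ℓ_r - ℓ_{r*}) / 2` of one labelled comparison
has exponential moment `E e^f = E √(P_r / P_{r*}) = 1 - E H²(σ(Δr*), σ(Δr))`, where `Δr` is the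
reward gap of the two responses. A Chernoff bound together with `1 - h ≤ e^{-h}` shows that the
i.i.d. sum of `N` copies of `f` exceeds `log (M / δ) - N · E H²` with probability at most `δ / M`.
A union bound makes this hold simultaneously for one member of `𝓡` near each of the `M` cover
elements. Since `log ∘ σ` is 1-Lipschitz and `d ↦ H²(p, σ d)` is `(1 + e^R̄)/4`-Lipschitz on
`[-R̄, R̄]`, passing from that member to any `r ∈ 𝓡` within `2ε` of it costs at most `1 / N`,
which `log (M / δ) ≥ 1` absorbs.
-/

local notation "σ" => Real.sigmoid

lemma sigmoid_eq_real_sigmoid : _root_.sigmoid = Real.sigmoid := by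
  funext z
  rw [_root_.sigmoid, Real.sigmoid_def, one_div]

lemma abs_sub_le_mul_of_hasDerivAt {f f' : ℝ → ℝ} {C : ℝ} (hf : ∀ x, HasDerivAt f (f' x) x)
    (hC : ∀ x, |f' x| ≤ C) (a b : ℝ) : |f a - f b| ≤ C * |a - b| := by
  simpa only [Real.norm_eq_abs] using convex_univ.norm_image_sub_le_of_norm_hasDerivWithin_le
    (fun x _ => (hf x).hasDerivWithinAt) (fun x _ => hC x) (Set.mem_univ b) (Set.mem_univ a)

namespace Real

lemma abs_sigmoid_sub_le (a b : ℝ) : |σ a - σ b| ≤ |a - b| / 4 := by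
  have h := abs_sub_le_mul_of_hasDerivAt hasDerivAt_sigmoid (C := 1 / 4) (fun x => by
    rw [abs_of_nonneg (mul_nonneg (sigmoid_nonneg x) (sub_nonneg.2 (sigmoid_le_one x)))]
    nlinarith [sq_nonneg (2 * σ x - 1)]) a b
  linarith

lemma abs_log_sigmoid_sub_le (a b : ℝ) : |log (σ a) - log (σ b)| ≤ |a - b| := by
  have hderiv (x : ℝ) : HasDerivAt (fun x => log (σ x)) (1 - σ x) x := by
    convert (hasDerivAt_sigmoid x).log (sigmoid_pos x).ne' using 1
    field_simp [(sigmoid_pos x).ne']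
  simpa using abs_sub_le_mul_of_hasDerivAt hderiv (C := 1) (fun x => by
    rw [abs_of_pos (sub_pos.2 (sigmoid_lt_one x))]; linarith [sigmoid_pos x]) a b

lemma neg_log_sigmoid_le {z R : ℝ} (h : -R ≤ z) : -log (σ z) ≤ log (1 + exp R) := by
  have hR : σ (-R) = (1 + exp R)⁻¹ := by rw [sigmoid_def, neg_neg]
  rw [neg_le, ← log_inv, ← hR]
  exact log_le_log (sigmoid_pos _) (sigmoid_le h)

lemma mul_exp_half_log_sub {p q : ℝ} (hp : 0 < p) (hq : 0 < q) :
    p * exp ((log q - log p) / 2) = √p * √q := by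
  rw [exp_half, exp_sub, exp_log hp, exp_log hq, sqrt_div' _ hp.le]
  have hsp : 0 < √p := sqrt_pos.2 hp
  field_simp
  exact (sq_sqrt hp.le).symm

end Real

lemma abs_sqrt_sub_sqrt_le {c a b : ℝ} (hc : 0 < c) (ha : c ≤ a) (hb : c ≤ b) :
    |√a - √b| ≤ |a - b| / (2 * √c) := by
  have hca : √c ≤ √a := sqrt_le_sqrt ha
  have hcb : √c ≤ √b := sqrt_le_sqrt hb
  have hsc : 0 < √c := sqrt_pos.2 hc
  have hprod : (√a - √b) * (√a + √b) = a - b := by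
    linear_combination sq_sqrt (hc.le.trans ha) - sq_sqrt (hc.le.trans hb)
  rw [le_div_iff₀ (by positivity), ← hprod, abs_mul, abs_of_pos (by linarith : 0 < √a + √b)]
  exact mul_le_mul_of_nonneg_left (by linarith) (abs_nonneg _)

lemma hellingerSq_nonneg (p q : ℝ) : 0 ≤ hellingerSq p q := by
  rw [hellingerSq]; positivity

lemma one_sub_hellingerSq {p q : ℝ} (hp0 : 0 ≤ p) (hp1 : p ≤ 1) (hq0 : 0 ≤ q) (hq1 : q ≤ 1) :
    1 - hellingerSq p q = √p * √q + √(1 - p) * √(1 - q) := by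
  rw [hellingerSq]
  linear_combination (-1 / 2 : ℝ) * (sq_sqrt hp0 + sq_sqrt hq0 + sq_sqrt (sub_nonneg.2 hp1)
    + sq_sqrt (sub_nonneg.2 hq1))

lemma hellingerSq_le_one {p q : ℝ} (hp0 : 0 ≤ p) (hp1 : p ≤ 1) (hq0 : 0 ≤ q) (hq1 : q ≤ 1) :
    hellingerSq p q ≤ 1 := by
  have hcoef : 0 ≤ √p * √q + √(1 - p) * √(1 - q) := by positivity
  linarith [one_sub_hellingerSq hp0 hp1 hq0 hq1]

lemma abs_hellingerSq_sub_le {p q q' c : ℝ} (hp0 : 0 ≤ p) (hp1 : p ≤ 1) (hc : 0 < c)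
    (hq : c ≤ q) (hq1 : c ≤ 1 - q) (hq' : c ≤ q') (hq1' : c ≤ 1 - q') :
    |hellingerSq p q - hellingerSq p q'| ≤ |q - q'| / √c := by
  have hsc : 0 < √c := sqrt_pos.2 hc
  have hsp : √p ≤ 1 := sqrt_le_one.2 hp1
  have hsp' : √(1 - p) ≤ 1 := sqrt_le_one.2 (by linarith)
  have hdiff : hellingerSq p q - hellingerSq p q' =
      √p * (√q' - √q) + √(1 - p) * (√(1 - q') - √(1 - q)) := by
    linear_combination one_sub_hellingerSq hp0 hp1 (by linarith : 0 ≤ q') (by linarith)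
      - one_sub_hellingerSq hp0 hp1 (by linarith : 0 ≤ q) (by linarith)
  calc |hellingerSq p q - hellingerSq p q'|
      ≤ √p * |√q' - √q| + √(1 - p) * |√(1 - q') - √(1 - q)| := by
        rw [hdiff]
        refine (abs_add_le _ _).trans_eq ?_
        rw [abs_mul, abs_mul, abs_of_nonneg (sqrt_nonneg p), abs_of_nonneg (sqrt_nonneg _)]
    _ ≤ |q' - q| / (2 * √c) + |(1 - q') - (1 - q)| / (2 * √c) := by
        gcongr
        · exact mul_le_of_le_one_left (abs_nonneg _) hsp |>.trans (abs_sqrt_sub_sqrt_le hc hq' hq)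
        · exact mul_le_of_le_one_left (abs_nonneg _) hsp' |>.trans
            (abs_sqrt_sub_sqrt_le hc hq1' hq1)
    _ = |q - q'| / √c := by
        rw [show (1 - q') - (1 - q) = q - q' by ring, abs_sub_comm]
        field_simp
        ring

lemma abs_hellingerSq_sigmoid_sub_le {p d d' R : ℝ} (hp0 : 0 ≤ p) (hp1 : p ≤ 1)
    (hd : |d| ≤ R) (hd' : |d'| ≤ R) :
    |hellingerSq p (σ d) - hellingerSq p (σ d')| ≤ (1 + exp R) * |d - d'| / 4 := by
  set c := σ (-R) with hc_def
  have hc : 0 < c := sigmoid_pos _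
  have hlow {z : ℝ} (hz : |z| ≤ R) : c ≤ σ z ∧ c ≤ 1 - σ z := by
    rw [abs_le] at hz
    rw [← sigmoid_neg]
    exact ⟨sigmoid_le hz.1, sigmoid_le (by linarith)⟩
  have hinv : 1 / √c ≤ 1 + exp R := by
    have hE : 1 ≤ 1 + exp R := by linarith [exp_pos R]
    rw [hc_def, sigmoid_def, neg_neg, sqrt_inv, one_div, inv_inv]
    exact sqrt_le_left (by linarith) |>.2 (by nlinarith)
  calc |hellingerSq p (σ d) - hellingerSq p (σ d')|
      ≤ |σ d - σ d'| * (1 / √c) := by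
        rw [mul_one_div]
        exact abs_hellingerSq_sub_le hp0 hp1 hc (hlow hd).1 (hlow hd).2 (hlow hd').1 (hlow hd').2
    _ ≤ |d - d'| / 4 * (1 + exp R) := by gcongr; exact abs_sigmoid_sub_le d d'
    _ = (1 + exp R) * |d - d'| / 4 := by ring

section BradleyTerry

variable {X A : Type*}

noncomputable def rewardGap (r : X → A → ℝ) (z : X × A × A) : ℝ := r z.1 z.2.1 - r z.1 z.2.2

noncomputable def btLogLik (r : X → A → ℝ) (e : (X × A × A) × Bool) : ℝ :=
  log (σ (if e.2 then rewardGap r e.1 else -rewardGap r e.1))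

noncomputable def halfLogLikRatio (r₀ r : X → A → ℝ) (e : (X × A × A) × Bool) : ℝ :=
  (btLogLik r e - btLogLik r₀ e) / 2

lemma BTLoss_eq (N : ℕ) (ω : Fin N → (X × A × A) × Bool) (r : X → A → ℝ) :
    BTLoss N ω r = -(1 / (N : ℝ)) * ∑ i, btLogLik r (ω i) := by
  rw [BTLoss, sigmoid_eq_real_sigmoid]
  congr 1
  refine Finset.sum_congr rfl fun i _ => ?_
  simp only [btLogLik, rewardGap]
  split_ifs <;> simp

lemma abs_rewardGap_le {r : X → A → ℝ} {R : ℝ} (hr : ∀ x a, r x a ∈ Set.Icc 0 R)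
    (z : X × A × A) : |rewardGap r z| ≤ R :=
  abs_sub_le_of_nonneg_of_le (hr _ _).1 (hr _ _).2 (hr _ _).1 (hr _ _).2

lemma abs_rewardGap_sub_le {r r' : X → A → ℝ} {c : ℝ} (h : ∀ x a, |r x a - r' x a| ≤ c)
    (z : X × A × A) : |rewardGap r z - rewardGap r' z| ≤ 2 * c := by
  calc |rewardGap r z - rewardGap r' z|
      = |(r z.1 z.2.1 - r' z.1 z.2.1) - (r z.1 z.2.2 - r' z.1 z.2.2)| := by
        simp only [rewardGap]; ring_nf
    _ ≤ c + c := (abs_sub _ _).trans (add_le_add (h _ _) (h _ _))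
    _ = 2 * c := by ring

lemma abs_btLogLik_sub_le {r r' : X → A → ℝ} {c : ℝ} (h : ∀ x a, |r x a - r' x a| ≤ c)
    (e : (X × A × A) × Bool) : |btLogLik r e - btLogLik r' e| ≤ 2 * c := by
  refine (abs_log_sigmoid_sub_le _ _).trans ?_
  cases e.2
  · simpa [neg_add_eq_sub, abs_sub_comm] using abs_rewardGap_sub_le h e.1
  · simpa using abs_rewardGap_sub_le h e.1

lemma btLogLik_nonpos (r : X → A → ℝ) (e : (X × A × A) × Bool) : btLogLik r e ≤ 0 :=
  log_nonpos (sigmoid_nonneg _) (sigmoid_le_one _)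

lemma neg_btLogLik_le {r : X → A → ℝ} {R : ℝ} (hr : ∀ z, |rewardGap r z| ≤ R)
    (e : (X × A × A) × Bool) : -btLogLik r e ≤ log (1 + exp R) := by
  refine neg_log_sigmoid_le ?_
  have := abs_le.1 (hr e.1)
  split_ifs <;> linarith

lemma BTLoss_sub_le_of_sum_lt {N : ℕ} (hN : 0 < N)
    {ω : Fin N → (X × A × A) × Bool} {r₀ r r' : X → A → ℝ} {c t : ℝ}
    (h : ∀ x a, |r x a - r' x a| ≤ c) (hω : ∑ i, halfLogLikRatio r₀ r' (ω i) < t) :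
    BTLoss N ω r₀ - BTLoss N ω r ≤ 2 * c + 2 * t / N := by
  have hNpos : (0 : ℝ) < N := Nat.cast_pos.2 hN
  have hdecomp : BTLoss N ω r₀ - BTLoss N ω r = (∑ i, (btLogLik r (ω i) - btLogLik r' (ω i))
      + 2 * ∑ i, halfLogLikRatio r₀ r' (ω i)) / N := by
    simp only [BTLoss_eq, halfLogLikRatio, Finset.sum_sub_distrib, ← Finset.sum_div]
    field_simp
    ring
  have hclose : ∑ i, (btLogLik r (ω i) - btLogLik r' (ω i)) ≤ N * (2 * c) := by
    calc _ ≤ ∑ _i : Fin N, 2 * c :=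
          Finset.sum_le_sum fun i _ => (le_abs_self _).trans (abs_btLogLik_sub_le h _)
      _ = N * (2 * c) := by simp
  rw [hdecomp, div_le_iff₀ hNpos, add_mul, div_mul_cancel₀ _ hNpos.ne']
  linarith

variable [MeasurableSpace X] [MeasurableSpace A]

lemma measurable_rewardGap {r : X → A → ℝ} (hr : Measurable (Function.uncurry r)) :
    Measurable (rewardGap r) :=
  (hr.comp (measurable_fst.prodMk (measurable_fst.comp measurable_snd))).sub
    (hr.comp (measurable_fst.prodMk (measurable_snd.comp measurable_snd)))

lemma measurable_btLogLik {r : X → A → ℝ} (hr : Measurable (Function.uncurry r)) :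
    Measurable (btLogLik r) := by
  have hgap : Measurable fun e : (X × A × A) × Bool => rewardGap r e.1 :=
    (measurable_rewardGap hr).comp measurable_fst
  exact measurable_log.comp (continuous_sigmoid.measurable.comp
    (Measurable.ite (measurable_snd (measurableSet_singleton true)) hgap hgap.neg))

noncomputable def expectedHellingerSq (μ : Measure (X × A × A)) (r₀ r : X → A → ℝ) : ℝ :=
  ∫ z, hellingerSq (σ (rewardGap r₀ z)) (σ (rewardGap r z)) ∂μ

lemma integrable_hellingerSq_sigmoid (μ : Measure (X × A × A)) [IsFiniteMeasure μ]
    {r₀ r : X → A → ℝ} (hr₀ : Measurable (Function.uncurry r₀))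
    (hr : Measurable (Function.uncurry r)) :
    Integrable (fun z => hellingerSq (σ (rewardGap r₀ z)) (σ (rewardGap r z))) μ := by
  have hp := continuous_sigmoid.measurable.comp (measurable_rewardGap hr₀)
  have hq := continuous_sigmoid.measurable.comp (measurable_rewardGap hr)
  refine Integrable.of_bound (C := 1) ?_ (ae_of_all _ fun z => ?_)
  · unfold hellingerSq
    exact (by fun_prop : Measurable _).aestronglyMeasurable
  · rw [norm_of_nonneg (hellingerSq_nonneg _ _)]
    exact hellingerSq_le_one (sigmoid_nonneg _) (sigmoid_le_one _) (sigmoid_nonneg _)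
      (sigmoid_le_one _)

lemma expectedHellingerSq_le_add (μ : Measure (X × A × A)) [IsProbabilityMeasure μ]
    {r₀ r r' : X → A → ℝ} {R c : ℝ} (hr₀ : Measurable (Function.uncurry r₀))
    (hr : Measurable (Function.uncurry r)) (hr' : Measurable (Function.uncurry r'))
    (hR : ∀ z, |rewardGap r z| ≤ R) (hR' : ∀ z, |rewardGap r' z| ≤ R)
    (h : ∀ x a, |r x a - r' x a| ≤ c) :
    expectedHellingerSq μ r₀ r ≤ expectedHellingerSq μ r₀ r' + (1 + exp R) * c / 2 := by
  have hpt (z : X × A × A) : hellingerSq (σ (rewardGap r₀ z)) (σ (rewardGap r z))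
      ≤ hellingerSq (σ (rewardGap r₀ z)) (σ (rewardGap r' z)) + (1 + exp R) * c / 2 := by
    have hH := abs_hellingerSq_sigmoid_sub_le (p := σ (rewardGap r₀ z)) (sigmoid_nonneg _)
      (sigmoid_le_one _) (hR z) (hR' z)
    have hgap : (1 + exp R) * |rewardGap r z - rewardGap r' z| / 4 ≤ (1 + exp R) * c / 2 := by
      have hd := abs_rewardGap_sub_le h z
      rw [div_le_div_iff₀ (by norm_num) (by norm_num)]
      nlinarith [exp_pos R]
    linarith [le_abs_self (hellingerSq (σ (rewardGap r₀ z)) (σ (rewardGap r z))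
      - hellingerSq (σ (rewardGap r₀ z)) (σ (rewardGap r' z)))]
  calc expectedHellingerSq μ r₀ r
      ≤ ∫ z, (hellingerSq (σ (rewardGap r₀ z)) (σ (rewardGap r' z)) + (1 + exp R) * c / 2) ∂μ :=
        integral_mono (integrable_hellingerSq_sigmoid μ hr₀ hr)
          ((integrable_hellingerSq_sigmoid μ hr₀ hr').add (integrable_const _)) hpt
    _ = expectedHellingerSq μ r₀ r' + (1 + exp R) * c / 2 := by
        rw [integral_add (integrable_hellingerSq_sigmoid μ hr₀ hr') (integrable_const _),
          integral_const, probReal_univ, one_smul, expectedHellingerSq]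

lemma integral_bool_of_apply_true {ν : Measure Bool} [IsProbabilityMeasure ν] {p : ℝ}
    (hp : ν {true} = ENNReal.ofReal p) (hp0 : 0 ≤ p) (f : Bool → ℝ) :
    ∫ y, f y ∂ν = p * f true + (1 - p) * f false := by
  have htrue : ν.real {true} = p := by rw [measureReal_def, hp, ENNReal.toReal_ofReal hp0]
  have hfalse : ν.real {false} = 1 - p := by
    rw [show ({false} : Set Bool) = {true}ᶜ by ext b; cases b <;> simp,
      probReal_compl_eq_one_sub (measurableSet_singleton _), htrue]
  simp [integral_fintype .of_finite, htrue, hfalse]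

lemma integral_exp_halfLogLikRatio_kernel {κ : Kernel (X × A × A) Bool} [IsMarkovKernel κ]
    {r₀ : X → A → ℝ} (hκ : ∀ z, κ z {true} = ENNReal.ofReal (σ (rewardGap r₀ z)))
    (r : X → A → ℝ) (z : X × A × A) :
    ∫ y, exp (halfLogLikRatio r₀ r (z, y)) ∂κ z
      = 1 - hellingerSq (σ (rewardGap r₀ z)) (σ (rewardGap r z)) := by
  rw [integral_bool_of_apply_true (hκ z) (sigmoid_nonneg _),
    one_sub_hellingerSq (sigmoid_nonneg _) (sigmoid_le_one _) (sigmoid_nonneg _)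
      (sigmoid_le_one _), ← sigmoid_neg, ← sigmoid_neg]
  simp only [halfLogLikRatio, btLogLik, if_true, Bool.false_eq_true, if_false]
  rw [mul_exp_half_log_sub (sigmoid_pos _) (sigmoid_pos _),
    mul_exp_half_log_sub (sigmoid_pos _) (sigmoid_pos _)]

lemma integrable_exp_halfLogLikRatio {ν : Measure ((X × A × A) × Bool)} [IsFiniteMeasure ν]
    {r₀ r : X → A → ℝ} (hr₀ : Measurable (Function.uncurry r₀))
    (hr : Measurable (Function.uncurry r)) {R : ℝ} (hR : ∀ z, |rewardGap r₀ z| ≤ R) :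
    Integrable (fun e => exp (halfLogLikRatio r₀ r e)) ν := by
  refine Integrable.of_bound (C := exp (log (1 + exp R) / 2)) ?_ (ae_of_all _ fun e => ?_)
  · exact (measurable_exp.comp (((measurable_btLogLik hr).sub
      (measurable_btLogLik hr₀)).div_const 2)).aestronglyMeasurable
  · rw [norm_of_nonneg (exp_pos _).le, exp_le_exp, halfLogLikRatio]
    linarith [btLogLik_nonpos r e, neg_btLogLik_le hR e]

lemma integral_exp_halfLogLikRatio (μ : Measure (X × A × A)) [IsProbabilityMeasure μ]
    {κ : Kernel (X × A × A) Bool} [IsMarkovKernel κ] {r₀ r : X → A → ℝ}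
    (hr₀ : Measurable (Function.uncurry r₀)) (hr : Measurable (Function.uncurry r)) {R : ℝ}
    (hR : ∀ z, |rewardGap r₀ z| ≤ R)
    (hκ : ∀ z, κ z {true} = ENNReal.ofReal (σ (rewardGap r₀ z))) :
    ∫ e, exp (halfLogLikRatio r₀ r e) ∂(μ ⊗ₘ κ) = 1 - expectedHellingerSq μ r₀ r := by
  rw [Measure.integral_compProd (integrable_exp_halfLogLikRatio hr₀ hr hR)]
  simp_rw [integral_exp_halfLogLikRatio_kernel hκ]
  rw [integral_sub (integrable_const 1) (integrable_hellingerSq_sigmoid μ hr₀ hr),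
    integral_const, probReal_univ, one_smul, expectedHellingerSq]

lemma BTLoss_sub_le_of_sum_lt_of_close (μ : Measure (X × A × A)) [IsProbabilityMeasure μ]
    {N : ℕ} (hN : 0 < N)
    {ω : Fin N → (X × A × A) × Bool} {r₀ r r' : X → A → ℝ}
    (hr₀ : Measurable (Function.uncurry r₀)) (hr : Measurable (Function.uncurry r))
    (hr' : Measurable (Function.uncurry r')) {R c L : ℝ} (hR : ∀ z, |rewardGap r z| ≤ R)
    (hR' : ∀ z, |rewardGap r' z| ≤ R) (h : ∀ x a, |r x a - r' x a| ≤ c) (hc0 : 0 ≤ c)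
    (hc : (1 + exp R) * c ≤ 1 / (3 * N)) (hL : 1 ≤ L)
    (hω : ∑ i, halfLogLikRatio r₀ r' (ω i) < L - N * expectedHellingerSq μ r₀ r') :
    BTLoss N ω r₀ - BTLoss N ω r ≤ -2 * expectedHellingerSq μ r₀ r + 3 / N * L := by
  have hNpos : (0 : ℝ) < N := Nat.cast_pos.2 hN
  have hloss := BTLoss_sub_le_of_sum_lt hN h hω
  have hH := expectedHellingerSq_le_add μ hr₀ hr hr' hR hR' h
  have hcc : c ≤ (1 + exp R) * c := le_mul_of_one_le_left hc0 (by linarith [exp_pos R])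
  have hLN : 1 / (N : ℝ) ≤ L / N := by gcongr
  have hsplit : 2 * (L - N * expectedHellingerSq μ r₀ r') / N
      = 2 * (L / N) - 2 * expectedHellingerSq μ r₀ r' := by field_simp
  have h3 : 3 / (N : ℝ) * L = 3 * (L / N) := by ring
  have h3N : 1 / (3 * (N : ℝ)) = 1 / N / 3 := by ring
  linarith

end BradleyTerry

section Concentration

variable {E : Type*} [MeasurableSpace E] {ν : Measure E} [IsProbabilityMeasure ν]

lemma measureReal_pi_le_sum_le {f : E → ℝ} (hf : Integrable (fun e => exp (f e)) ν) (N : ℕ)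
    (t : ℝ) :
    (Measure.pi fun _ : Fin N => ν).real {ω | t ≤ ∑ i, f (ω i)}
      ≤ exp (-t) * (∫ e, exp (f e) ∂ν) ^ N := by
  have hprod (ω : Fin N → E) : exp (1 * ∑ i, f (ω i)) = ∏ i, exp (f (ω i)) := by
    rw [one_mul, exp_sum]
  have hint : Integrable (fun ω : Fin N → E => exp (1 * ∑ i, f (ω i)))
      (Measure.pi fun _ => ν) := by
    simp_rw [hprod]
    exact Integrable.fintype_prod fun _ => hf
  have hchernoff := measure_ge_le_exp_mul_mgf t zero_le_one hint
  rwa [mgf, neg_one_mul, funext hprod, integral_fintype_prod_eq_pow (fun e => exp (f e)),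
    Fintype.card_fin] at hchernoff

lemma measureReal_pi_sub_le_sum_le {f : E → ℝ} (hf : Integrable (fun e => exp (f e)) ν)
    {h : ℝ} (hh : ∫ e, exp (f e) ∂ν = 1 - h) (N : ℕ) (s : ℝ) :
    (Measure.pi fun _ : Fin N => ν).real {ω | s - N * h ≤ ∑ i, f (ω i)} ≤ exp (-s) := by
  have h0 : 0 ≤ 1 - h := hh ▸ integral_nonneg fun e => (exp_pos _).le
  have hone : exp h * (1 - h) ≤ 1 := by
    calc exp h * (1 - h) ≤ exp h * exp (-h) := by gcongr; linarith [add_one_le_exp (-h)]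
      _ = 1 := by rw [← exp_add, add_neg_cancel, exp_zero]
  calc _ ≤ exp (-(s - N * h)) * (1 - h) ^ N := hh ▸ measureReal_pi_le_sum_le hf N _
    _ = exp (-s) * (exp h * (1 - h)) ^ N := by
        rw [mul_pow, ← exp_nat_mul, ← mul_assoc, ← exp_add, neg_sub, sub_eq_neg_add]
    _ ≤ exp (-s) := mul_le_of_le_one_right (exp_pos _).le (pow_le_one₀ (by positivity) hone)

end Concentration

lemma ofReal_one_sub_le_of_compl_iUnion_subset {Ω ι : Type*} [MeasurableSpace Ω] [Fintype ι]
    {μ : Measure Ω} [IsProbabilityMeasure μ] {B : ι → Set Ω} {S : Set Ω} {δ : ℝ} (hδ : 0 ≤ δ)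
    (hB : ∀ j, μ.real (B j) ≤ δ / Fintype.card ι) (hS : (⋃ j, B j)ᶜ ⊆ S) :
    ENNReal.ofReal (1 - δ) ≤ μ S := by
  set U := ⋃ j, B j
  have hU : μ.real U ≤ δ := by
    calc μ.real U ≤ ∑ j, μ.real (B j) := measureReal_iUnion_fintype_le B
      _ ≤ ∑ _j : ι, δ / Fintype.card ι := Finset.sum_le_sum fun j _ => hB j
      _ ≤ δ := by
          rw [Finset.sum_const, Finset.card_univ, nsmul_eq_mul]
          rcases eq_or_ne (Fintype.card ι) 0 with h | h
          · simpa [h] using hδ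
          · rw [mul_div_cancel₀ _ (Nat.cast_ne_zero.2 h)]
  have hUc : 1 - μ.real U ≤ μ.real S := by
    have := measureReal_union_le (μ := μ) U Uᶜ
    rw [Set.union_compl_self, probReal_univ] at this
    linarith [measureReal_mono (μ := μ) hS]
  rw [← ofReal_measureReal]
  exact ENNReal.ofReal_le_ofReal (by linarith)

lemma exists_subset_cover {X A ι : Type*} {S : Set (X → A → ℝ)} (hS : S.Nonempty)
    (cover : ι → X → A → ℝ) (ε : ℝ) :
    ∃ rep : ι → X → A → ℝ, (∀ j, rep j ∈ S) ∧ ∀ r ∈ S, ∀ j,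
      (∀ x a, |r x a - cover j x a| ≤ ε) → ∀ x a, |r x a - rep j x a| ≤ 2 * ε := by
  have (j : ι) : ∃ r' ∈ S, ∀ r ∈ S,
      (∀ x a, |r x a - cover j x a| ≤ ε) → ∀ x a, |r x a - r' x a| ≤ 2 * ε := by
    by_cases hj : ∃ r' ∈ S, ∀ x a, |r' x a - cover j x a| ≤ ε
    · obtain ⟨r', hr'S, hr'⟩ := hj
      refine ⟨r', hr'S, fun r _ hr x a => (abs_sub_le _ (cover j x a) _).trans ?_⟩
      rw [abs_sub_comm (cover j x a)]
      linarith [hr x a, hr' x a]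
    · obtain ⟨r', hr'S⟩ := hS
      exact ⟨r', hr'S, fun r hr hrc => (hj ⟨r, hr, hrc⟩).elim⟩
  choose rep hrepS hrep using this
  exact ⟨rep, hrepS, fun r hr j => hrep j r hr⟩

lemma one_le_log_div {M δ : ℝ} (hM : 1 ≤ M) (hδ : 0 < δ) (hδ' : δ < 1 / exp 1) :
    1 ≤ log (M / δ) := by
  rw [le_log_iff_exp_le (by positivity), le_div_iff₀ hδ]
  rw [lt_div_iff₀ (exp_pos 1)] at hδ'
  linarith

theorem uniform_concentration_BTLoss_general
    {X A : Type*} [MeasurableSpace X] [MeasurableSpace A]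
    (Rbar : ℝ)
    (𝓡 : Set (X → A → ℝ))
    (h𝓡meas : ∀ r ∈ 𝓡, Measurable (Function.uncurry r))
    (h𝓡bdd : ∀ r ∈ 𝓡, ∀ x a, r x a ∈ Set.Icc (0 : ℝ) Rbar)
    (rstar : X → A → ℝ) (hrstar : rstar ∈ 𝓡)
    (μD : Measure (X × A × A)) [IsProbabilityMeasure μD]
    (κ : Kernel (X × A × A) Bool) [IsMarkovKernel κ]
    (hκ : ∀ z : X × A × A,
      κ z {true} = ENNReal.ofReal (_root_.sigmoid (rstar z.1 z.2.1 - rstar z.1 z.2.2)))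
    (N : ℕ) (hN : 0 < N)
    (δ : ℝ) (hδ : 0 < δ) (hδ' : δ < 1 / Real.exp 1)
    (M : ℕ) (cover : Fin M → X → A → ℝ)
    (hcover : ∀ r ∈ 𝓡, ∃ j : Fin M, ∀ x a,
      |r x a - cover j x a| ≤ 1 / (6 * (1 + Real.exp Rbar) * N)) :
    ENNReal.ofReal (1 - δ) ≤
      Measure.pi (fun _ : Fin N => μD ⊗ₘ κ)
        {ω | ∀ r ∈ 𝓡,
          BTLoss N ω rstar - BTLoss N ω r ≤
            -2 * (∫ z, hellingerSq (_root_.sigmoid (rstar z.1 z.2.1 - rstar z.1 z.2.2))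
                (_root_.sigmoid (r z.1 z.2.1 - r z.1 z.2.2)) ∂μD)
              + (3 / N) * Real.log (M / δ)} := by
  simp only [sigmoid_eq_real_sigmoid] at hκ ⊢
  have hgap (r) (hr : r ∈ 𝓡) := abs_rewardGap_le (h𝓡bdd r hr)
  obtain ⟨rep, hrep𝓡, hrep⟩ := exists_subset_cover ⟨rstar, hrstar⟩ cover _
  obtain ⟨j₀, -⟩ := hcover rstar hrstar
  have hM : (1 : ℝ) ≤ M := Nat.one_le_cast.2 j₀.pos
  refine ofReal_one_sub_le_of_compl_iUnion_subset hδ.le (B := fun j => {ω |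
    log (M / δ) - N * expectedHellingerSq μD rstar (rep j)
      ≤ ∑ i, halfLogLikRatio rstar (rep j) (ω i)}) (fun j => ?_) ?_
  · refine (measureReal_pi_sub_le_sum_le (integrable_exp_halfLogLikRatio (h𝓡meas _ hrstar)
      (h𝓡meas _ (hrep𝓡 j)) (hgap _ hrstar)) (integral_exp_halfLogLikRatio μD (h𝓡meas _ hrstar)
      (h𝓡meas _ (hrep𝓡 j)) (hgap _ hrstar) hκ) N _).trans_eq ?_
    rw [Fintype.card_fin, exp_neg, exp_log (by positivity), inv_div]
  · intro ω hω r hr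
    obtain ⟨j, hj⟩ := hcover r hr
    refine BTLoss_sub_le_of_sum_lt_of_close μD hN (h𝓡meas _ hrstar) (h𝓡meas r hr)
      (h𝓡meas _ (hrep𝓡 j)) (hgap r hr) (hgap _ (hrep𝓡 j)) (hrep r hr j hj) (by positivity)
      (le_of_eq (by field_simp; ring)) (one_le_log_div hM hδ hδ')
      (not_le.1 fun h => hω (Set.mem_iUnion.2 ⟨j, h⟩))

/-- Uniform concentration of the Bradley–Terry maximum-likelihood loss: with probability at
least `1 − δ` over `N` i.i.d. preference samples, simultaneously for every `r` in the reward
class, `L(r*) − L(r)` is bounded by minus twice the expected squared Hellinger distance plus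
`(3/N)·log(M/δ)`. -/
theorem uniform_concentration_BTLoss
    {X A : Type*} [MeasurableSpace X] [MeasurableSpace A]
    (Rbar : ℝ) (hRbar : 0 < Rbar)
    (𝓡 : Set (X → A → ℝ))
    (h𝓡meas : ∀ r ∈ 𝓡, Measurable (Function.uncurry r))
    (h𝓡bdd : ∀ r ∈ 𝓡, ∀ x a, r x a ∈ Set.Icc (0 : ℝ) Rbar)
    (rstar : X → A → ℝ) (hrstar : rstar ∈ 𝓡)
    (μD : Measure (X × A × A)) [IsProbabilityMeasure μD]
    (κ : Kernel (X × A × A) Bool) [IsMarkovKernel κ]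
    (hκ : ∀ z : X × A × A,
      κ z {true} = ENNReal.ofReal (_root_.sigmoid (rstar z.1 z.2.1 - rstar z.1 z.2.2)))
    (N : ℕ) (hN : 0 < N)
    (δ : ℝ) (hδ : 0 < δ) (hδ' : δ < 1 / Real.exp 1)
    (M : ℕ) (hM : 0 < M) (cover : Fin M → X → A → ℝ)
    (hcover : ∀ r ∈ 𝓡, ∃ j : Fin M, ∀ x a,
      |r x a - cover j x a| ≤ 1 / (6 * (1 + Real.exp Rbar) * N)) :
    ENNReal.ofReal (1 - δ) ≤
      Measure.pi (fun _ : Fin N => μD ⊗ₘ κ)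
        {ω | ∀ r ∈ 𝓡,
          BTLoss N ω rstar - BTLoss N ω r ≤
            -2 * (∫ z, hellingerSq (_root_.sigmoid (rstar z.1 z.2.1 - rstar z.1 z.2.2))
                (_root_.sigmoid (r z.1 z.2.1 - r z.1 z.2.2)) ∂μD)
              + (3 / N) * Real.log (M / δ)} :=
  uniform_concentration_BTLoss_general Rbar 𝓡 h𝓡meas h𝓡bdd rstar hrstar μD κ hκ N hN δ hδ hδ' M
    cover hcover
end

section
/- Let {(x_i, a_i¹, a_i⁰, y_i)}_{i=1}^N be any fixed finite dataset with y_i ∈ {0,1}, and for r : X×A → ℝ define L(r) = −(1/N)·Σ_{i=1}^N [ y_i·log σ(r(x_i,a_i¹) − r(x_i,a_i⁰)) + (1−y_i)·log σ(r(x_i,a_i⁰) − r(x_i,a_i¹)) ]. Let R̄ ≥ 0 and ε ≥ 0. If r† : X×A → [0, R̄] and r : X×A → ℝ satisfy sup_{(x,a)} |r†(x,a) − r(x,a)| ≤ ε, then L(r†) − L(r) ≤ 4·ε·(1 + e^{R̄}). -/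
open Real

/-! `log ∘ σ` is 1-Lipschitz, so moving every reward by at most `ε` moves each
preference margin `r(x,a¹) − r(x,a⁰)` by at most `2ε` and hence the averaged loss by at most
`2ε`, which is below `4ε(1 + e^{R̄})`. -/

theorem log_sigmoid_eq_neg_log_one_add_exp (z : ℝ) :
    log (_root_.sigmoid z) = -log (1 + exp (-z)) := by
  rw [_root_.sigmoid, one_div, log_inv]

theorem log_sigmoid_sub_le_abs (a b : ℝ) :
    log (_root_.sigmoid a) - log (_root_.sigmoid b) ≤ |a - b| := by
  rw [log_sigmoid_eq_neg_log_one_add_exp, log_sigmoid_eq_neg_log_one_add_exp, neg_sub_neg]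
  rcases le_total b a with hba | hab
  · have hle : 1 + exp (-b) ≤ exp (a - b) * (1 + exp (-a)) := by
      rw [mul_one_add, ← exp_add, show a - b + -a = -b by ring]
      linarith [one_le_exp (sub_nonneg.mpr hba)]
    calc log (1 + exp (-b)) - log (1 + exp (-a))
        ≤ a - b := by
          have := log_le_log (by positivity) hle
          rw [log_mul (by positivity) (by positivity), log_exp] at this
          linarith
      _ ≤ |a - b| := le_abs_self _
  · have hle : 1 + exp (-b) ≤ 1 + exp (-a) := by
      gcongr
    linarith [log_le_log (by positivity) hle, abs_nonneg (a - b)]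

theorem abs_sub_sub_sub_le {X A : Type*} {r r' : X → A → ℝ} {δ : ℝ}
    (h : ∀ x a, |r x a - r' x a| ≤ δ) (x : X) (a b : A) :
    |(r x a - r x b) - (r' x a - r' x b)| ≤ 2 * δ := by
  calc |(r x a - r x b) - (r' x a - r' x b)| = |(r x a - r' x a) - (r x b - r' x b)| := by
        ring_nf
    _ ≤ |r x a - r' x a| + |r x b - r' x b| := abs_sub _ _
    _ ≤ 2 * δ := by linarith [h x a, h x b]

theorem BTLoss_sub_le {X A : Type*} (N : ℕ) (data : Fin N → (X × A × A) × Bool)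
    {r r' : X → A → ℝ} {δ : ℝ} (hδ : 0 ≤ δ) (h : ∀ x a, |r x a - r' x a| ≤ δ) :
    BTLoss N data r - BTLoss N data r' ≤ 2 * δ := by
  have hterm : ∀ x (a b : A), log (_root_.sigmoid (r' x a - r' x b)) -
      log (_root_.sigmoid (r x a - r x b)) ≤ 2 * δ := fun x a b =>
    (log_sigmoid_sub_le_abs _ _).trans <| by
      rw [abs_sub_comm]; exact abs_sub_sub_sub_le h x a b
  unfold BTLoss
  rw [neg_mul, neg_mul, neg_sub_neg, ← mul_sub, ← Finset.sum_sub_distrib]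
  calc 1 / (N : ℝ) * ∑ i, _ ≤ 1 / (N : ℝ) * ∑ _i : Fin N, 2 * δ := by
        gcongr with i
        split_ifs
        exacts [hterm _ _ _, hterm _ _ _]
    _ = (N / N : ℝ) * (2 * δ) := by
          simp only [Finset.sum_const, Finset.card_univ, Fintype.card_fin, nsmul_eq_mul]; ring
    _ ≤ 2 * δ := mul_le_of_le_one_left (by positivity) (div_self_le_one _)

theorem BTLoss_sup_norm_stability_general
    {X A : Type*}
    (N : ℕ) (data : Fin N → (X × A × A) × Bool)
    (R : ℝ) (ε : ℝ) (hε : 0 ≤ ε)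
    (rdag r : X → A → ℝ)
    (hclose : ∀ x a, |rdag x a - r x a| ≤ ε) :
    BTLoss N data rdag - BTLoss N data r ≤ 4 * ε * (1 + Real.exp R) :=
  calc BTLoss N data rdag - BTLoss N data r ≤ 2 * ε := BTLoss_sub_le N data hε hclose
    _ ≤ 4 * ε * (1 + exp R) := by nlinarith [exp_pos R]

/-- Sup-norm stability of the Bradley–Terry loss: if `r†` takes values in `[0, R̄]` and
`‖r† − r‖_∞ ≤ ε`, then `L(r†) − L(r) ≤ 4·ε·(1 + e^{R̄})`. -/
theorem BTLoss_sup_norm_stability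
    {X A : Type*} [MeasurableSpace X] [MeasurableSpace A]
    (N : ℕ) (hN : 0 < N) (data : Fin N → (X × A × A) × Bool)
    (R : ℝ) (hR : 0 ≤ R) (ε : ℝ) (hε : 0 ≤ ε)
    (rdag r : X → A → ℝ)
    (hrdag : ∀ x a, rdag x a ∈ Set.Icc 0 R)
    (hclose : ∀ x a, |rdag x a - r x a| ≤ ε) :
    BTLoss N data rdag - BTLoss N data r ≤ 4 * ε * (1 + Real.exp R) :=
  BTLoss_sup_norm_stability_general N data R ε hε rdag r hclose
end

section
/- Fix β > 0 and c > 0, and consider probability vectors p = (p_a, p_b, p_c) with p_a, p_b, p_c ≥ 0, p_a + p_b + p_c = 1, and p_a > 0. Then: (i) the minimizers of F_DPO(p) = log(1 + (p_b/p_a)^β) over this set are exactly the vectors with p_b = 0 (and p_a > 0 arbitrary), the minimum value is 0, and in particular there exist minimizers with p_c > 0; (ii) the function F_RPO(p) = log(1 + (p_b/p_a)^β) − c·log(p_a) has the unique minimizer p = (1, 0, 0), with minimum value 0. -/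
open Real

/-- The toy three-response example: probability vectors `(p_a, p_b, p_c)` with positive
mass on `a`; the DPO loss `log(1 + (p_b/p_a)^β)` admits degenerate minimizers placing mass
on `c`, while the RPO objective `log(1 + (p_b/p_a)^β) − c·log(p_a)` has `(1,0,0)` as its
unique minimizer. -/
theorem toy_dpo_rpo_minimizers (β c : ℝ) (hβ : 0 < β) (hc : 0 < c) :
    let S : Set (ℝ × ℝ × ℝ) := {p | 0 ≤ p.1 ∧ 0 ≤ p.2.1 ∧ 0 ≤ p.2.2 ∧
      p.1 + p.2.1 + p.2.2 = 1 ∧ 0 < p.1}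
    let FDPO : ℝ × ℝ × ℝ → ℝ := fun p => Real.log (1 + (p.2.1 / p.1) ^ β)
    let FRPO : ℝ × ℝ × ℝ → ℝ := fun p => Real.log (1 + (p.2.1 / p.1) ^ β) - c * Real.log p.1
    -- (i) the minimizers of FDPO over S are exactly the points with `p_b = 0`,
    -- the minimum value is 0, and there exist minimizers with `p_c > 0`;
    (∀ q ∈ S, ((∀ q' ∈ S, FDPO q ≤ FDPO q') ↔ q.2.1 = 0)) ∧
    (∀ q ∈ S, q.2.1 = 0 → FDPO q = 0) ∧
    (∃ q ∈ S, (∀ q' ∈ S, FDPO q ≤ FDPO q') ∧ 0 < q.2.2) ∧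
    -- (ii) FRPO has the unique minimizer `(1, 0, 0)`, with minimum value 0.
    (((1 : ℝ), (0 : ℝ), (0 : ℝ)) ∈ S) ∧
    FRPO ((1 : ℝ), (0 : ℝ), (0 : ℝ)) = 0 ∧
    (∀ q ∈ S, q ≠ ((1 : ℝ), (0 : ℝ), (0 : ℝ)) →
      FRPO ((1 : ℝ), (0 : ℝ), (0 : ℝ)) < FRPO q) := by
  intro S FDPO FDRPO
  -- basic facts
  have hzero : ∀ q : ℝ × ℝ × ℝ, q ∈ S → q.2.1 = 0 → FDPO q = 0 := by
    intro q hq hb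
    simp only [FDPO, hb, zero_div, Real.zero_rpow hβ.ne', add_zero, Real.log_one]
  have hnonneg : ∀ q : ℝ × ℝ × ℝ, q ∈ S → 0 ≤ FDPO q := by
    intro q hq
    have : (0:ℝ) ≤ (q.2.1 / q.1) ^ β := Real.rpow_nonneg (div_nonneg hq.2.1 hq.1) β
    exact Real.log_nonneg (by linarith)
  have hpos : ∀ q : ℝ × ℝ × ℝ, q ∈ S → 0 < q.2.1 → 0 < FDPO q := by
    intro q hq hb
    have h1 : (0:ℝ) < (q.2.1 / q.1) ^ β :=
      Real.rpow_pos_of_pos (div_pos hb hq.2.2.2.2) β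
    exact Real.log_pos (by linarith)
  refine ⟨?_, hzero, ?_, ?_, ?_, ?_⟩
  · intro q hq
    constructor
    · intro hmin
      by_contra hb
      have hb' : 0 < q.2.1 := lt_of_le_of_ne hq.2.1 (Ne.symm hb)
      have h100 : ((1:ℝ), (0:ℝ), (0:ℝ)) ∈ S := by
        refine ⟨by norm_num, le_refl 0, le_refl 0, by norm_num, by norm_num⟩
      have := hmin _ h100
      have h0 : FDPO ((1:ℝ), (0:ℝ), (0:ℝ)) = 0 := hzero _ h100 rfl
      have := hpos q hq hb'
      linarith
    · intro hb q' hq'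
      rw [hzero q hq hb]
      exact hnonneg q' hq'
  · refine ⟨(1/2, 0, 1/2), ⟨by norm_num, le_refl 0, by norm_num, by norm_num, by norm_num⟩,
      ?_, by norm_num⟩
    intro q' hq'
    rw [hzero _ ⟨by norm_num, le_refl 0, by norm_num, by norm_num, by norm_num⟩ rfl]
    exact hnonneg q' hq'
  · exact ⟨by norm_num, le_refl 0, le_refl 0, by norm_num, by norm_num⟩
  · show Real.log (1 + ((0:ℝ) / 1) ^ β) - c * Real.log 1 = 0
    norm_num [Real.zero_rpow hβ.ne']
  · intro q hq hne
    have hFR0 : FDRPO ((1:ℝ), (0:ℝ), (0:ℝ)) = 0 := by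
      show Real.log (1 + ((0:ℝ) / 1) ^ β) - c * Real.log 1 = 0
      norm_num [Real.zero_rpow hβ.ne']
    rw [hFR0]
    obtain ⟨ha, hb, hcc, hsum, hapos⟩ := hq
    have hale : q.1 ≤ 1 := by linarith
    rcases lt_or_eq_of_le hale with h1 | h1
    · have hlog : Real.log q.1 < 0 := Real.log_neg hapos h1
      simp only [FDRPO]
      have hF := hnonneg q ⟨ha, hb, hcc, hsum, hapos⟩
      simp only [FDPO] at hF
      nlinarith [mul_pos hc (neg_pos.mpr hlog)]
    · exfalso
      apply hne
      have hb0 : q.2.1 = 0 := by linarith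
      have hc0 : q.2.2 = 0 := by linarith
      exact Prod.ext h1 (Prod.ext hb0 hc0)
end
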